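/- arXiv:2107.02696 — 5 statements merged into one kernel-verified Lean document; each statement's English description precedes it below -/
import Mathlib

section
/- For the sequence f with f_{-2}=1, f_{-1}=0, f_n = k·f_{n-1}+f_{n-2}, the congruence (-1)^n · f_{n-2} · f_{n-1} ≡ k (mod f_n) holds for all n ≥ 2. -/
def fseq (k : ℤ) : ℕ → ℤ
  | 0 => 1
  | 1 => 0
  | (n+2) => k * fseq k (n+1) + fseq k n

lemma fseq_cassini (k : ℤ) : ∀ n : ℕ,
    fseq k (n + 2) * fseq k n - fseq k (n + 1) ^ 2 = (-1) ^ n := by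
  intro n
  induction n with
  | zero => simp [fseq]
  | succ m ih =>
      have h : fseq k (m + 3) = k * fseq k (m + 2) + fseq k (m + 1) := rfl
      have h2 : fseq k (m + 2) = k * fseq k (m + 1) + fseq k m := rfl
      show fseq k (m + 3) * fseq k (m + 1) - fseq k (m + 2) ^ 2 = (-1) ^ (m + 1)
      rw [h, pow_succ]
      linear_combination (-1 : ℤ) * ih - fseq k (m + 2) * h2

theorem stmt_3 (k : ℤ) (hk : 0 < k) :
    ∀ n : ℕ, 2 ≤ n →
      Int.ModEq (fseq k (n + 2)) ((-1) ^ n * fseq k n * fseq k (n + 1)) k := by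
  intro n _
  have cas := fseq_cassini k n
  have h : fseq k (n + 2) = k * fseq k (n + 1) + fseq k n := rfl
  rw [Int.modEq_iff_dvd]
  have hs : ((-1 : ℤ) ^ n) * ((-1 : ℤ) ^ n) = 1 := by
    rw [← pow_add]; simp [pow_mul]
  refine ⟨(-1) ^ n * (k * fseq k n - fseq k (n + 1)), ?_⟩
  linear_combination (-((-1 : ℤ) ^ n) * k) * cas +
    ((-1 : ℤ) ^ n * fseq k (n+1)) * h + (-k) * hs
end

section
/- If k is even, f_m is odd, e = k/2 + ℓ·f_m with ℓ ≥ 1, and d = e² + 2ℓ·f_{m-1} + 1, then (x, y) = (f_m·e + f_{m-1}, f_m) satisfies x² - d·y² = (-1)^{m+1}. -/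
lemma fseq_det (k : ℤ) : ∀ n : ℕ, fseq k n * fseq k (n + 2) - (fseq k (n + 1)) ^ 2 = (-1) ^ n
  | 0 => by simp [fseq]
  | (n+1) => by
    have ih := fseq_det k n
    have h3 : fseq k (n + 3) = k * fseq k (n + 2) + fseq k (n + 1) := rfl
    have h2 : fseq k (n + 2) = k * fseq k (n + 1) + fseq k n := rfl
    rw [show n + 1 + 2 = n + 3 from rfl, h3, pow_succ]
    linear_combination (-1 : ℤ) * ih - fseq k (n + 2) * h2

theorem stmt_9 (k : ℤ) (hk : 0 < k) (hke : Even k) (m : ℕ) (hm : 1 ≤ m)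
    (hodd : Odd (fseq k (m + 2))) (ℓ : ℤ) (hℓ : 1 ≤ ℓ) (e d : ℤ)
    (he : 2 * e = k + 2 * ℓ * fseq k (m + 2))
    (hd : d = e ^ 2 + 2 * ℓ * fseq k (m + 1) + 1) :
    (fseq k (m + 2) * e + fseq k (m + 1)) ^ 2 - d * (fseq k (m + 2)) ^ 2 =
      (-1) ^ (m + 1) := by
  have lem := fseq_det k (m + 1)
  have h3 : fseq k (m + 1 + 2) = k * fseq k (m + 2) + fseq k (m + 1) := rfl
  rw [h3] at lem
  subst hd
  linear_combination lem + fseq k (m + 1) * fseq k (m + 2) * he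
end

section
/- If k is even, f_m is even, e = k/2 + ℓ·f_m/2 with ℓ ≥ 1, and d = e² + ℓ·f_{m-1} + 1, then (x, y) = (f_m·e + f_{m-1}, f_m) satisfies x² - d·y² = (-1)^{m+1}. -/
lemma cassini (k : ℤ) : ∀ n : ℕ, fseq k n * fseq k (n+2) - (fseq k (n+1))^2 = (-1)^n := by
  intro n
  induction n with
  | zero => simp [fseq]
  | succ n ih =>
    have h3 : fseq k (n+3) = k * fseq k (n+2) + fseq k (n+1) := rfl
    have h2 : fseq k (n+2) = k * fseq k (n+1) + fseq k n := rfl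
    show fseq k (n+1) * fseq k (n+3) - (fseq k (n+2))^2 = (-1)^(n+1)
    rw [pow_succ]
    linear_combination (fseq k (n+1)) * h3 - (fseq k (n+2)) * h2 - ih

theorem stmt_10 (k : ℤ) (hk : 0 < k) (hke : Even k) (m : ℕ) (hm : 1 ≤ m)
    (heven : Even (fseq k (m + 2))) (ℓ : ℤ) (hℓ : 1 ≤ ℓ) (e d : ℤ)
    (he : 2 * e = k + ℓ * fseq k (m + 2))
    (hd : d = e ^ 2 + ℓ * fseq k (m + 1) + 1) :
    (fseq k (m + 2) * e + fseq k (m + 1)) ^ 2 - d * (fseq k (m + 2)) ^ 2 =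
      (-1) ^ (m + 1) := by
  have key : fseq k (m+1) * fseq k (m+3) - (fseq k (m+2))^2 = (-1)^(m+1) := cassini k (m+1)
  have h3 : fseq k (m+3) = k * fseq k (m+2) + fseq k (m+1) := rfl
  linear_combination (- (fseq k (m+2))^2) * hd + (fseq k (m+2) * fseq k (m+1)) * he
    + key - (fseq k (m+1)) * h3
end

section
/- For every even positive integer k and every integer ℓ ≥ 1, setting e = k/2 + ℓ(k²+1) and d = e² + (2ke+1)/(k²+1), the pair (x,y) = ((k²+1)e + k, k²+1) satisfies x² - d·y² = -1, with d a positive integer. -/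
theorem stmt_14 (k : ℤ) (hk : 0 < k) (hke : Even k) (ℓ : ℤ) (hℓ : 1 ≤ ℓ)
    (e d : ℤ) (he : 2 * e = k + 2 * ℓ * (k ^ 2 + 1))
    (hd : d = e ^ 2 + (2 * k * e + 1) / (k ^ 2 + 1)) :
    (k ^ 2 + 1) ∣ (2 * k * e + 1) ∧
      ((k ^ 2 + 1) * e + k) ^ 2 - d * (k ^ 2 + 1) ^ 2 = -1 ∧ 0 < d := by
  have hne : (k ^ 2 + 1) ≠ 0 := by positivity
  have key : 2 * k * e + 1 = (k ^ 2 + 1) * (2 * ℓ * k + 1) := by linear_combination k * he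
  have hdvd : (k ^ 2 + 1) ∣ (2 * k * e + 1) := ⟨_, key⟩
  have hq : (2 * k * e + 1) / (k ^ 2 + 1) = 2 * ℓ * k + 1 := by
    rw [key, Int.mul_ediv_cancel_left _ hne]
  rw [hq] at hd
  refine ⟨hdvd, ?_, ?_⟩
  · rw [hd]; linear_combination (k * (k^2+1)) * he
  · nlinarith [sq_nonneg e]
end

section
/- For the sequence f with f_{-2}=1, f_{-1}=0, f_n = k·f_{n-1}+f_{n-2}, the coefficient expansion f_n = Σ_{i≥0, n-2i≥0} a_{n-2i}·k^{n-2i} holds, where a_{n-2i} = 1 + Σ_{1≤s≤n-2i} C(s+i-1, s). -/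
lemma coeff_eq (i m : ℕ) :
    1 + ∑ s ∈ Finset.Icc 1 m, Nat.choose (s + i - 1) s = Nat.choose (m + i) m := by
  induction m with
  | zero => simp
  | succ b ih =>
    rw [Finset.sum_Icc_succ_top (by omega : 1 ≤ b + 1), ← add_assoc, ih]
    have h1 : b + 1 + i - 1 = b + i := by omega
    rw [h1, show b + 1 + i = (b + i) + 1 from by omega, Nat.choose_succ_succ]

lemma pascal' (n i : ℕ) :
    Nat.choose (n + 1 - i) (i + 1) = Nat.choose (n - i) (i + 1) + Nat.choose (n - i) i := by
  rcases le_or_gt i n with h | h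
  · rw [show n + 1 - i = (n - i) + 1 from by omega, Nat.choose_succ_succ, add_comm]
  · rw [Nat.choose_eq_zero_of_lt (by omega), Nat.choose_eq_zero_of_lt (by omega),
      Nat.choose_eq_zero_of_lt (by omega)]

lemma sum_rec (k : ℤ) (n : ℕ) :
    ∑ i ∈ Finset.range (n + 3), ((n + 2 - i).choose i : ℤ) * k ^ (n + 2 - 2 * i) =
      k * ∑ i ∈ Finset.range (n + 2), ((n + 1 - i).choose i : ℤ) * k ^ (n + 1 - 2 * i) +
        ∑ i ∈ Finset.range (n + 1), ((n - i).choose i : ℤ) * k ^ (n - 2 * i) := by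
  rw [Finset.sum_range_succ' _ (n + 2)]
  have step1 : ∀ i ∈ Finset.range (n + 2),
      ((n + 2 - (i + 1)).choose (i + 1) : ℤ) * k ^ (n + 2 - 2 * (i + 1)) =
      ((n - i).choose (i + 1) : ℤ) * k ^ (n - 2 * i) + ((n - i).choose i : ℤ) * k ^ (n - 2 * i) := by
    intro i _
    have h1 : n + 2 - (i + 1) = n + 1 - i := by omega
    have h2 : n + 2 - 2 * (i + 1) = n - 2 * i := by omega
    rw [h1, h2, pascal']
    push_cast
    ring
  rw [Finset.sum_congr rfl step1, Finset.sum_add_distrib]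
  -- second piece equals the G n sum
  have h2 : ∑ i ∈ Finset.range (n + 2), ((n - i).choose i : ℤ) * k ^ (n - 2 * i)
      = ∑ i ∈ Finset.range (n + 1), ((n - i).choose i : ℤ) * k ^ (n - 2 * i) := by
    rw [Finset.sum_range_succ, Nat.choose_eq_zero_of_lt (by omega)]
    simp
  -- first piece plus the i=0 term equals k * G (n+1)
  have h1 : (∑ i ∈ Finset.range (n + 2), ((n - i).choose (i + 1) : ℤ) * k ^ (n - 2 * i))
      + ((n + 2 - 0).choose 0 : ℤ) * k ^ (n + 2 - 2 * 0)
      = k * ∑ i ∈ Finset.range (n + 2), ((n + 1 - i).choose i : ℤ) * k ^ (n + 1 - 2 * i) := by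
    rw [Finset.mul_sum, Finset.sum_range_succ' (fun i => k * (((n + 1 - i).choose i : ℤ) * k ^ (n + 1 - 2 * i))) (n + 1)]
    rw [Finset.sum_range_succ, Nat.choose_eq_zero_of_lt (by omega)]
    simp only [Nat.cast_zero, zero_mul, add_zero, Nat.choose_zero_right, Nat.cast_one, one_mul]
    congr 1
    · apply Finset.sum_congr rfl
      intro i _
      have hh : n + 1 - (i + 1) = n - i := by omega
      rw [hh]
      rcases le_or_gt (2 * i + 1) n with h | h
      · have : n + 1 - 2 * (i + 1) = n - 2 * i - 1 := by omega
        rw [this]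
        conv_lhs => rw [show n - 2 * i = (n - 2 * i - 1) + 1 from by omega, pow_succ]
        ring
      · rw [Nat.choose_eq_zero_of_lt (by omega)]
        simp
    · rw [show n + 2 - 2 * 0 = (n + 1 - 2 * 0) + 1 from by omega]
      ring
  rw [h2, ← h1]
  ring

lemma fseq_sum (k : ℤ) : ∀ n : ℕ,
    fseq k (n + 2) = ∑ i ∈ Finset.range (n + 1), ((n - i).choose i : ℤ) * k ^ (n - 2 * i) := by
  intro n
  induction n using Nat.twoStepInduction with
  | zero => simp [fseq]
  | one => simp [fseq, Finset.sum_range_succ]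
  | more m ih1 ih2 =>
    show fseq k (m + 4) = _
    have : fseq k (m + 4) = k * fseq k (m + 3) + fseq k (m + 2) := rfl
    rw [this, ih1, ih2, show m + 2 + 1 = m + 3 from rfl, sum_rec]

theorem stmt_17 (k : ℤ) (hk : 0 < k) (n : ℕ) :
    fseq k (n + 2) =
      ∑ i ∈ Finset.range (n / 2 + 1),
        ((1 + ∑ s ∈ Finset.Icc 1 (n - 2 * i), Nat.choose (s + i - 1) s : ℕ) : ℤ) *
          k ^ (n - 2 * i) := by
  rw [fseq_sum]
  rw [← Finset.sum_subset (Finset.range_subset_range.mpr (by omega : n / 2 + 1 ≤ n + 1))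
    (by
      intro i _ hi
      simp only [Finset.mem_range, not_lt] at hi
      rw [Nat.choose_eq_zero_of_lt (by omega)]
      simp)]
  apply Finset.sum_congr rfl
  intro i hi
  simp only [Finset.mem_range] at hi
  have h2i : 2 * i ≤ n := by omega
  congr 1
  rw [coeff_eq, show n - 2 * i + i = n - i from by omega,
    ← Nat.choose_symm (by omega : i ≤ n - i), show n - i - i = n - 2 * i from by omega]
end
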